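/- arXiv:1401.1272 — 2 statements merged into one kernel-verified Lean document; each statement's English description precedes it below -/
import Mathlib

section
/- For n ≥ 2 with μ_i^+ as defined (μ_i^+ = (2n-i-1)i/2 for i ≤ n, μ_i^+ = n(n-1)/2 + (i-n)(-2n+i+1) for n+1 ≤ i ≤ 2n-2, μ_i^+ = (3n-i-1)(i-n)/2 for 2n-1 ≤ i ≤ 3n-2), the polynomial identity Σ_{i=1}^{3n-2} μ_i^+ x^i = (Σ_{i=1}^{n} x^i) · (Σ_{i=1}^{n-1} ((n-i) x^{i-1} + i x^{i+n-1})) holds in ℤ[x]. -/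
/-- The integer coefficients `μ_i^+` of the Jordan `n`-commutator expansion. -/
def muPlusZ (n i : ℕ) : ℤ :=
  if i ≤ n then (2 * (n : ℤ) - i - 1) * i / 2
  else if i ≤ 2 * n - 2 then (n : ℤ) * ((n : ℤ) - 1) / 2 + ((i : ℤ) - n) * (-2 * (n : ℤ) + i + 1)
  else (3 * (n : ℤ) - i - 1) * ((i : ℤ) - n) / 2

/-!
Multiply both sides by `(1 - X)^3`. On each of the ranges `1 ≤ i ≤ n`, `n < i ≤ 2n - 2` and
`2n - 2 < i ≤ 3n - 2` the coefficient `2 μ_i^+` is a quadratic polynomial in `i`, so its third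
difference vanishes and each block of the left-hand side telescopes to boundary terms. On the
right, `(1 - X) ∑ X^i` and `(1 - X)^2` times the second factor (whose coefficients are linear on
two ranges) have short closed forms. Both sides become
`(X - X^(n+1)) (n - 1 - n X + 2 X^n - n X^(2n-1) + (n - 1) X^(2n))`.
-/

open Finset Polynomial

section ThirdDifference

variable {R : Type*} [CommRing R]

def cubicTail (f : ℕ → R) (x : R) (m : ℕ) : R :=
  f m + (f (m + 1) - 3 * f m) * x + (f (m + 2) - 3 * f (m + 1) + 3 * f m) * x ^ 2

theorem sum_Ico_mul_one_sub_pow_three {f : ℕ → R}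
    (hf : ∀ i, f (i + 3) - 3 * f (i + 2) + 3 * f (i + 1) - f i = 0) (x : R) {a b : ℕ}
    (hab : a ≤ b) :
    (∑ i ∈ Ico a b, f i * x ^ i) * (1 - x) ^ 3
      = x ^ a * cubicTail f x a - x ^ b * cubicTail f x b := by
  induction b, hab using Nat.le_induction with
  | base => simp
  | succ b _ ih =>
    have h := hf b
    rw [sum_Ico_succ_top (by omega), add_mul, ih]
    simp only [cubicTail, add_assoc, Nat.reduceAdd] at h ⊢
    linear_combination x ^ (b + 3) * h

end ThirdDifference

theorem geom_sum_Icc_one_mul_one_sub {R : Type*} [CommRing R] (x : R) (n : ℕ) :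
    (∑ i ∈ Icc 1 n, x ^ i) * (1 - x) = x - x ^ (n + 1) := by
  have h := geom_sum_Ico_mul x (Nat.le_add_left 1 n)
  rw [Ico_add_one_right_eq_Icc] at h
  linear_combination -h

theorem one_sub_X_ne_zero {R : Type*} [Ring R] [Nontrivial R] : (1 - X : R[X]) ≠ 0 :=
  fun h => by simpa using congrArg (eval 0) h

theorem sum_Icc_mul_one_sub_X_sq {n : ℕ} (hn : 1 ≤ n) :
    (∑ i ∈ Icc 1 (n - 1), (C ((n : ℤ) - i) * X ^ (i - 1) + C (i : ℤ) * X ^ (i + n - 1)))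
        * (1 - X) ^ 2
      = ((n : ℤ[X]) - 1) - (n : ℤ[X]) * X + 2 * X ^ n - (n : ℤ[X]) * X ^ (2 * n - 1)
        + ((n : ℤ[X]) - 1) * X ^ (2 * n) := by
  obtain ⟨k, rfl⟩ := Nat.exists_eq_add_of_le' hn
  have hXB : X * ∑ i ∈ Icc 1 (k + 1 - 1),
        (C ((↑(k + 1) : ℤ) - i) * X ^ (i - 1) + C (i : ℤ) * X ^ (i + (k + 1) - 1))
      = ∑ i ∈ Ico 1 (k + 1), (((k + 1 : ℕ) - i : ℤ) : ℤ[X]) * X ^ i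
        + ∑ i ∈ Ico (k + 2) (2 * k + 2), ((i - (k + 1 : ℕ) : ℤ) : ℤ[X]) * X ^ i := by
    rw [show k + 2 = 1 + (k + 1) by omega, show 2 * k + 2 = k + 1 + (k + 1) by omega,
      ← sum_Ico_add', ← sum_add_distrib, Ico_add_one_right_eq_Icc, Nat.add_sub_cancel, mul_sum]
    refine sum_congr rfl fun i hi => ?_
    obtain ⟨j, rfl⟩ := Nat.exists_eq_add_of_le' (mem_Icc.mp hi).1
    simp only [eq_intCast C, Nat.add_sub_cancel, show j + 1 + (k + 1) - 1 = j + 1 + k by omega]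
    push_cast
    ring
  have hlow := sum_Ico_mul_one_sub_pow_three
    (f := fun i : ℕ => (((k + 1 : ℕ) - i : ℤ) : ℤ[X])) (by intro i; push_cast; ring) X
    (by omega : 1 ≤ k + 1)
  have hhigh := sum_Ico_mul_one_sub_pow_three
    (f := fun i : ℕ => ((i - (k + 1 : ℕ) : ℤ) : ℤ[X])) (by intro i; push_cast; ring) X
    (by omega : k + 2 ≤ 2 * k + 2)
  refine mul_left_cancel₀ (mul_ne_zero X_ne_zero one_sub_X_ne_zero) ?_
  rw [show 2 * (k + 1) - 1 = 2 * k + 1 by omega, show 2 * (k + 1) = 2 * k + 2 by omega,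
    show ∀ B : ℤ[X], X * (1 - X) * (B * (1 - X) ^ 2) = X * B * (1 - X) ^ 3 from
      fun B => by ring, hXB, add_mul, hlow, hhigh]
  simp only [cubicTail]
  push_cast
  ring

section DoubledCoefficients

variable {n i : ℕ}

/- `2 μ_i^+` on the ranges `i ≤ n`, `n < i ≤ 2n - 2` and `2n - 2 < i`: doubling clears the
exact divisions by `2` in `muPlusZ`. -/
def twiceMuLow (n i : ℕ) : ℤ := (2 * n - i - 1) * i

def twiceMuMid (n i : ℕ) : ℤ := n * (n - 1) + 2 * (i - n) * (i + 1 - 2 * n)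

def twiceMuHigh (n i : ℕ) : ℤ := (3 * n - i - 1) * (i - n)

theorem two_mul_muPlusZ_of_le (h : i ≤ n) : 2 * muPlusZ n i = twiceMuLow n i := by
  have hev : Even ((2 * (n : ℤ) - i - 1) * i) := by
    have : (2 * (n : ℤ) - i - 1) * i = 2 * (n * i) - i * (i + 1) := by ring
    exact this ▸ (even_two_mul _).sub (Int.even_mul_succ_self _)
  rw [muPlusZ, if_pos h, Int.mul_ediv_cancel' (even_iff_two_dvd.mp hev), twiceMuLow]

theorem two_mul_muPlusZ_of_lt_of_le (h₁ : n < i) (h₂ : i ≤ 2 * n - 2) :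
    2 * muPlusZ n i = twiceMuMid n i := by
  rw [muPlusZ, if_neg h₁.not_ge, if_pos h₂, mul_add,
    Int.mul_ediv_cancel' (even_iff_two_dvd.mp (Int.even_mul_pred_self _)), twiceMuMid]
  ring

theorem two_mul_muPlusZ_of_lt (h₁ : n < i) (h₂ : 2 * n - 2 < i) :
    2 * muPlusZ n i = twiceMuHigh n i := by
  have hev : Even ((3 * (n : ℤ) - i - 1) * (i - n)) := by
    have : (3 * (n : ℤ) - i - 1) * (i - n) = 2 * (n * (i - n)) - (i - n) * (i - n + 1) := by
      ring
    exact this ▸ (even_two_mul _).sub (Int.even_mul_succ_self _)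
  rw [muPlusZ, if_neg h₁.not_ge, if_neg h₂.not_ge,
    Int.mul_ediv_cancel' (even_iff_two_dvd.mp hev), twiceMuHigh]

end DoubledCoefficients

theorem two_mul_sum_muPlusZ {n : ℕ} (hn : 2 ≤ n) :
    2 * ∑ i ∈ Icc 1 (3 * n - 2), C (muPlusZ n i) * X ^ i
      = ∑ i ∈ Ico 1 (n + 1), (twiceMuLow n i : ℤ[X]) * X ^ i
        + ∑ i ∈ Ico (n + 1) (2 * n - 1), (twiceMuMid n i : ℤ[X]) * X ^ i
        + ∑ i ∈ Ico (2 * n - 1) (3 * n - 1), (twiceMuHigh n i : ℤ[X]) * X ^ i := by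
  have hμ (i : ℕ) : 2 * (C (muPlusZ n i) * X ^ i) = ((2 * muPlusZ n i : ℤ) : ℤ[X]) * X ^ i := by
    rw [eq_intCast C]
    push_cast
    ring
  rw [← Ico_add_one_right_eq_Icc, show 3 * n - 2 + 1 = 3 * n - 1 by omega,
    ← sum_Ico_consecutive _ (by omega : 1 ≤ n + 1) (by omega : n + 1 ≤ 3 * n - 1),
    ← sum_Ico_consecutive _ (by omega : n + 1 ≤ 2 * n - 1) (by omega : 2 * n - 1 ≤ 3 * n - 1),
    mul_add, mul_add, mul_sum, mul_sum, mul_sum, add_assoc]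
  refine congrArg₂ _ (sum_congr rfl fun i hi => ?_)
    (congrArg₂ _ (sum_congr rfl fun i hi => ?_) (sum_congr rfl fun i hi => ?_)) <;>
    rw [mem_Ico] at hi <;> rw [hμ]
  · rw [two_mul_muPlusZ_of_le (by omega)]
  · rw [two_mul_muPlusZ_of_lt_of_le (by omega) (by omega)]
  · rw [two_mul_muPlusZ_of_lt (by omega) (by omega)]

theorem sum_muPlusZ_mul_one_sub_X_cube {n : ℕ} (hn : 2 ≤ n) :
    (∑ i ∈ Icc 1 (3 * n - 2), C (muPlusZ n i) * X ^ i) * (1 - X) ^ 3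
      = (X - X ^ (n + 1)) * (((n : ℤ[X]) - 1) - (n : ℤ[X]) * X + 2 * X ^ n
        - (n : ℤ[X]) * X ^ (2 * n - 1) + ((n : ℤ[X]) - 1) * X ^ (2 * n)) := by
  have hlow := sum_Ico_mul_one_sub_pow_three (f := fun i => (twiceMuLow n i : ℤ[X]))
    (fun i => by simp only [twiceMuLow]; push_cast; ring) X (by omega : 1 ≤ n + 1)
  have hmid := sum_Ico_mul_one_sub_pow_three (f := fun i => (twiceMuMid n i : ℤ[X]))
    (fun i => by simp only [twiceMuMid]; push_cast; ring) X (by omega : n + 1 ≤ 2 * n - 1)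
  have hhigh := sum_Ico_mul_one_sub_pow_three (f := fun i => (twiceMuHigh n i : ℤ[X]))
    (fun i => by simp only [twiceMuHigh]; push_cast; ring) X (by omega : 2 * n - 1 ≤ 3 * n - 1)
  refine mul_left_cancel₀ (two_ne_zero (α := ℤ[X])) ?_
  rw [← mul_assoc, two_mul_sum_muPlusZ hn, add_mul, add_mul, hlow, hmid, hhigh]
  obtain ⟨k, rfl⟩ := Nat.exists_eq_add_of_le' hn
  simp only [cubicTail, twiceMuLow, twiceMuMid, twiceMuHigh,
    show 2 * (k + 2) - 1 = 2 * k + 3 by omega, show 3 * (k + 2) - 1 = 3 * k + 5 by omega]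
  push_cast
  ring

theorem stmt13 (n : ℕ) (hn : 2 ≤ n) :
    (∑ i ∈ Finset.Icc 1 (3 * n - 2),
        Polynomial.C (muPlusZ n i) * Polynomial.X ^ i : Polynomial ℤ)
      = (∑ i ∈ Finset.Icc 1 n, (Polynomial.X : Polynomial ℤ) ^ i) *
          ∑ i ∈ Finset.Icc 1 (n - 1),
            (Polynomial.C ((n : ℤ) - i) * Polynomial.X ^ (i - 1)
              + Polynomial.C (i : ℤ) * Polynomial.X ^ (i + n - 1)) := by
  refine mul_right_cancel₀ (pow_ne_zero 3 one_sub_X_ne_zero) ?_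
  rw [sum_muPlusZ_mul_one_sub_X_cube hn, ← geom_sum_Icc_one_mul_one_sub,
    ← sum_Icc_mul_one_sub_X_sq (by omega)]
  ring
end

section
/- For n ≥ 2 and integers 1 ≤ p < q with p ≤ n, q ≤ p+n-1, the signature of the permutation of {1,…,3n-2} given by the sequence X_1 X_2 X_3, where X_1 = (2,…,p, p+2n-1,…,3n-2), X_2 = (1, p+1,…,q-1, q+n,…,p+2n-2), X_3 = (q,…,q+n-1), equals (-1)^{(p+1-q)n+1}. -/
/-!
Rotating the block of positions `a, …, a + L - 1` cyclically by `k` steps is `finRotate L ^ k`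
transported into `Fin N`, so its sign is `(-1) ^ (k * (L - 1))`. The permutation `X₁ X₂ X₃` is the
composite `ρ₁ ∘ ρ₂ ∘ ρ₃` of three such rotations, where (in 1-based positions) `ρ₃` rotates the
block `p, …, 3n-2` by `2n - 1` steps, `ρ₂` the block `q, …, p+2n-2` by `n` steps and `ρ₁` the
block `1, …, p` by one step. The sign is therefore
`(-1) ^ ((p - 1) + n (p + 2n - q - 2) + (2n - 1)(3n - p - 2))`, and this exponent differs from
`(p + 1 - q) n + 1` by the even number `2 (p - n p + 4 n² - 5 n)`.
-/

open Equiv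

theorem coe_finRotate_pow {m : ℕ} (k : ℕ) (i : Fin m) :
    ((finRotate m ^ k) i : ℕ) = (i + k) % m := by
  induction k with
  | zero => simp [Nat.mod_eq_of_lt i.isLt]
  | succ k ih =>
    obtain ⟨m, rfl⟩ : ∃ m', m = m' + 1 := ⟨m - 1, by have := i.pos; omega⟩
    rw [pow_succ', Perm.mul_apply, finRotate_apply, Fin.val_add, ih, Fin.val_one',
      Nat.add_mod_mod, Nat.mod_add_mod, add_assoc]

section IntervalRotate

variable {N : ℕ}

def Fin.intervalEquiv {a L : ℕ} (h : a + L ≤ N) :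
    Fin L ≃ {x : Fin N // a ≤ (x : ℕ) ∧ (x : ℕ) < a + L} where
  toFun i := ⟨⟨a + i, by omega⟩, by simp⟩
  invFun x := ⟨x.1 - a, by omega⟩
  left_inv i := by ext; simp
  right_inv x := by ext; dsimp only; omega

def Fin.intervalRotate (a L k : ℕ) (h : a + L ≤ N) : Perm (Fin N) :=
  (finRotate L ^ k).extendDomain (Fin.intervalEquiv h)

theorem Fin.sign_intervalRotate (a L k : ℕ) (h : a + L ≤ N) :
    Perm.sign (Fin.intervalRotate a L k h) = (-1) ^ (k * (L - 1)) := by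
  rw [Fin.intervalRotate, Perm.sign_extendDomain, map_pow, sign_finRotate, ← pow_mul, mul_comm]

theorem Fin.coe_intervalRotate {a L k : ℕ} (h : a + L ≤ N) (x : Fin N) :
    (Fin.intervalRotate a L k h x : ℕ) =
      if a ≤ (x : ℕ) ∧ (x : ℕ) < a + L then a + ((x : ℕ) - a + k) % L else x := by
  unfold Fin.intervalRotate
  split_ifs with hx
  · rw [Perm.extendDomain_apply_subtype _ (Fin.intervalEquiv h) hx]
    simp [Fin.intervalEquiv, coe_finRotate_pow]
  · rw [Perm.extendDomain_apply_not_subtype _ (Fin.intervalEquiv h) hx]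

theorem Fin.coe_intervalRotate_of_le {a L k : ℕ} (h : a + L ≤ N) (hk : k ≤ L) (x : Fin N) :
    (Fin.intervalRotate a L k h x : ℕ) =
      if a ≤ (x : ℕ) ∧ (x : ℕ) < a + L then
        (if (x : ℕ) + k < a + L then (x : ℕ) + k else (x : ℕ) + k - L)
      else x := by
  rw [Fin.coe_intervalRotate]
  split_ifs with hx hxk
  · rw [Nat.mod_eq_of_lt (by omega)]; omega
  · rw [Nat.mod_eq_sub_mod (by omega), Nat.mod_eq_of_lt (by omega)]; omega
  · rfl

end IntervalRotate

theorem Int.neg_one_pow_eq_neg_one_zpow_of_even_sub {m : ℕ} {z : ℤ} (h : Even ((m : ℤ) - z)) :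
    (-1 : ℤˣ) ^ m = (-1) ^ z := by
  rw [← zpow_natCast, ← Int.negOnePow_def, ← Int.negOnePow_def, Int.negOnePow_eq_iff]
  exact h

theorem stmt16_general (n p q : ℕ) (hp1 : 1 ≤ p) (hpq : p < q) (hpn : p ≤ n)
    (hq : q ≤ p + n - 1)
    (σ : Equiv.Perm (Fin (3 * n - 2)))
    (hσ : ∀ x : Fin (3 * n - 2), (σ x : ℕ) + 1 =
      if (x : ℕ) + 1 ≤ p - 1 then (x : ℕ) + 2
      else if (x : ℕ) + 1 ≤ n - 1 then (x : ℕ) + 2 * n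
      else if (x : ℕ) + 1 = n then 1
      else if (x : ℕ) + 1 ≤ n + q - p - 1 then (x : ℕ) + 1 + p - n
      else if (x : ℕ) + 1 ≤ 2 * n - 2 then (x : ℕ) + 1 + p
      else (x : ℕ) + 1 + q + 1 - 2 * n) :
    Equiv.Perm.sign σ = (-1 : ℤˣ) ^ (((p : ℤ) + 1 - q) * n + 1) := by
  have h₁ : 0 + p ≤ 3 * n - 2 := by omega
  have h₂ : q - 1 + (p + 2 * n - q - 1) ≤ 3 * n - 2 := by omega
  have h₃ : p - 1 + (3 * n - p - 1) ≤ 3 * n - 2 := by omega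
  have hk₂ : n ≤ p + 2 * n - q - 1 := by omega
  have hk₃ : 2 * n - 1 ≤ 3 * n - p - 1 := by omega
  have hσ_eq : σ = Fin.intervalRotate 0 p 1 h₁ * Fin.intervalRotate _ _ n h₂ *
      Fin.intervalRotate _ _ (2 * n - 1) h₃ := by
    ext x
    have e₃ := Fin.coe_intervalRotate_of_le h₃ hk₃ x
    have e₂ := Fin.coe_intervalRotate_of_le h₂ hk₂ (Fin.intervalRotate _ _ (2 * n - 1) h₃ x)
    have e₁ := Fin.coe_intervalRotate_of_le h₁ hp1
      (Fin.intervalRotate _ _ n h₂ (Fin.intervalRotate _ _ (2 * n - 1) h₃ x))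
    have e := hσ x
    simp only [Perm.mul_apply]
    split_ifs at e <;>
    · simp (disch := omega) only [if_pos, if_neg] at e₃
      simp (disch := omega) only [if_pos, if_neg] at e₂
      simp (disch := omega) only [if_pos, if_neg] at e₁
      omega
  rw [hσ_eq, map_mul, map_mul, Fin.sign_intervalRotate, Fin.sign_intervalRotate,
    Fin.sign_intervalRotate, ← pow_add, ← pow_add]
  refine Int.neg_one_pow_eq_neg_one_zpow_of_even_sub ⟨p - n * p + 4 * n ^ 2 - 5 * n, ?_⟩
  push_cast (disch := omega) [Nat.cast_sub]
  ring

theorem stmt16 (n p q : ℕ) (hn : 2 ≤ n) (hp1 : 1 ≤ p) (hpq : p < q) (hpn : p ≤ n)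
    (hq : q ≤ p + n - 1)
    (σ : Equiv.Perm (Fin (3 * n - 2)))
    (hσ : ∀ x : Fin (3 * n - 2), (σ x : ℕ) + 1 =
      if (x : ℕ) + 1 ≤ p - 1 then (x : ℕ) + 2
      else if (x : ℕ) + 1 ≤ n - 1 then (x : ℕ) + 2 * n
      else if (x : ℕ) + 1 = n then 1
      else if (x : ℕ) + 1 ≤ n + q - p - 1 then (x : ℕ) + 1 + p - n
      else if (x : ℕ) + 1 ≤ 2 * n - 2 then (x : ℕ) + 1 + p
      else (x : ℕ) + 1 + q + 1 - 2 * n) :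
    Equiv.Perm.sign σ = (-1 : ℤˣ) ^ (((p : ℤ) + 1 - q) * n + 1) :=
  stmt16_general n p q hp1 hpq hpn hq σ hσ
end
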